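/- arXiv:1406.3272 — 5 statements merged into one kernel-verified Lean document; each statement's English description precedes it below -/
import Mathlib

section
/- Let R be a Noetherian commutative ring, I ⊆ R a finitely generated ideal, and M a flat R-module such that M/IM is a projective R/I-module. Then the I-adic completion of M is a flat R-module. -/
/-! By the equational criterion we must show that a relation `∑ fᵢ xᵢ = 0` in the completion
is trivial. Choose generators of the syzygies of `f`, so that `R^c → R^l → R` is exact; as `M` is
flat, it stays exact after tensoring with `M`. Artin–Rees, pushed through the flat module `M`,
gives for each of the two maps a uniform shift `K` such that an element whose image lies in
`I^(n+K)` lies in `I^n` modulo the kernel. With these bounds a Cauchy sequence in the kernel of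
the second map lifts along the first level by level, successive lifts being corrected by kernel
elements so that the lifts again form a Cauchy sequence. So the completed sequence is exact in
the middle, which says that the relation is trivial. -/

open TensorProduct LinearMap Submodule

section

variable {R : Type*} [CommRing R] (I : Ideal R) (M : Type*) [AddCommGroup M] [Module R M]
  {N P : Type*} [AddCommGroup N] [Module R N] [AddCommGroup P] [Module R P]

theorem Ideal.exists_comap_pow_smul_top_le_ker_sup [IsNoetherianRing R] [Module.Finite R P]
    (g : N →ₗ[R] P) :
    ∃ K, ∀ n, (I ^ (n + K) • ⊤ : Submodule R P).comap g ≤ ker g ⊔ I ^ n • ⊤ := by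
  obtain ⟨K, hK⟩ := I.exists_pow_inf_eq_pow_smul (range g)
  refine ⟨K, fun n x hx ↦ ?_⟩
  have h : g x ∈ I ^ (n + K) • ⊤ ⊓ range g := ⟨hx, mem_range_self g x⟩
  rw [hK (n + K) (by omega), Nat.add_sub_cancel] at h
  rw [sup_comm, ← comap_map_eq, map_smul'', Submodule.map_top]
  exact (smul_mono_right _ inf_le_right : _ ≤ I ^ n • range g) h

theorem LinearMap.range_lTensor_subtype_le_iff {S : Submodule R P} {X : Submodule R (M ⊗[R] P)} :
    range (S.subtype.lTensor M) ≤ X ↔ ∀ m, ∀ p ∈ S, m ⊗ₜ[R] p ∈ X := by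
  refine ⟨fun h m p hp ↦ h ⟨m ⊗ₜ ⟨p, hp⟩, rfl⟩, fun h ↦ ?_⟩
  rintro _ ⟨t, rfl⟩
  induction t using TensorProduct.induction_on with
  | zero => simp
  | tmul m p => exact h m p p.2
  | add t t' ht ht' => rw [map_add]; exact add_mem ht ht'

variable {M} in
theorem TensorProduct.tmul_mem_smul_top {J : Ideal R} (m : M) {p : P}
    (hp : p ∈ (J • ⊤ : Submodule R P)) : m ⊗ₜ[R] p ∈ (J • ⊤ : Submodule R (M ⊗[R] P)) := by
  induction hp using smul_induction_on' with
  | smul r hr p _ => rw [tmul_smul]; exact smul_mem_smul hr trivial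
  | add p _ q _ hp hq => rw [tmul_add]; exact add_mem hp hq

theorem LinearMap.range_lTensor_subtype_smul_top (J : Ideal R) :
    range ((J • ⊤ : Submodule R P).subtype.lTensor M) = J • ⊤ := by
  refine le_antisymm ((range_lTensor_subtype_le_iff M).2 fun m _ hp ↦ tmul_mem_smul_top m hp) ?_
  refine smul_le.2 ?_
  rintro r hr t -
  induction t using TensorProduct.induction_on with
  | zero => simp
  | tmul m p => exact ⟨m ⊗ₜ ⟨r • p, smul_mem_smul hr trivial⟩, by simp [tmul_smul]⟩
  | add t t' ht ht' => rw [smul_add]; exact add_mem ht ht'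

theorem Module.Flat.comap_lTensor_range_lTensor_subtype_le [Module.Flat R M] (g : N →ₗ[R] P)
    (T : Submodule R P) :
    (range (T.subtype.lTensor M)).comap (g.lTensor M) ≤ range ((T.comap g).subtype.lTensor M) := by
  rintro x ⟨y, hy⟩
  have hexact := Module.Flat.lTensor_exact M (exact_subtype_ker_map (T.mkQ ∘ₗ g))
  rw [ker_comp, ker_mkQ] at hexact
  refine (hexact x).1 ?_
  rw [lTensor_comp_apply, ← hy, ← lTensor_comp_apply,
    (exact_subtype_mkQ T).linearMap_comp_eq_zero, lTensor_zero, LinearMap.zero_apply]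

theorem Module.Flat.exists_comap_lTensor_pow_smul_top_le [IsNoetherianRing R] [Module.Finite R P]
    [Module.Flat R M] (g : N →ₗ[R] P) :
    ∃ K, ∀ n, (I ^ (n + K) • ⊤ : Submodule R (M ⊗[R] P)).comap (g.lTensor M) ≤
      ker (g.lTensor M) ⊔ I ^ n • ⊤ := by
  obtain ⟨K, hK⟩ := I.exists_comap_pow_smul_top_le_ker_sup g
  refine ⟨K, fun n ↦ ?_⟩
  calc _ ≤ range (((I ^ (n + K) • ⊤ : Submodule R P).comap g).subtype.lTensor M) := by
        rw [← range_lTensor_subtype_smul_top M]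
        exact comap_lTensor_range_lTensor_subtype_le M g _
    _ ≤ _ := by
      refine (range_lTensor_subtype_le_iff M).2 fun m p hp ↦ ?_
      obtain ⟨p₁, hp₁, p₂, hp₂, rfl⟩ := mem_sup.1 (hK n hp)
      rw [tmul_add]
      exact add_mem (mem_sup_left (by simp [mem_ker.1 hp₁]))
        (mem_sup_right (tmul_mem_smul_top m hp₂))

namespace Matrix

variable {α β γ : Type*} [Fintype α]

def smulVecLin (A : Matrix β α R) : (α → M) →ₗ[R] (β → M) :=
  LinearMap.pi fun b ↦ ∑ a, A b a • LinearMap.proj a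

@[simp]
theorem smulVecLin_apply (A : Matrix β α R) (v : α → M) (b : β) :
    A.smulVecLin M v b = ∑ a, A b a • v a := by
  simp [smulVecLin]

variable [DecidableEq α] [Fintype β] [DecidableEq β] [Fintype γ] [DecidableEq γ]

theorem smulVecLin_piScalarRight (A : Matrix β α R) (t : M ⊗[R] (α → R)) :
    A.smulVecLin M (piScalarRight R R M α t) =
      piScalarRight R R M β (A.mulVecLin.lTensor M t) := by
  induction t using TensorProduct.induction_on with
  | zero => simp
  | tmul m w =>
    funext b
    simp [piScalarRight_apply, mulVec, dotProduct, Finset.sum_smul, mul_smul]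
  | add t t' ht ht' => rw [map_add, map_add, map_add, map_add, ht, ht']

theorem exists_comap_smulVecLin_pow_smul_top_le [IsNoetherianRing R] [Module.Flat R M]
    (A : Matrix β α R) :
    ∃ K, ∀ n, (I ^ (n + K) • ⊤ : Submodule R (β → M)).comap (A.smulVecLin M) ≤
      ker (A.smulVecLin M) ⊔ I ^ n • ⊤ := by
  obtain ⟨K, hK⟩ := Module.Flat.exists_comap_lTensor_pow_smul_top_le I M A.mulVecLin
  refine ⟨K, fun n v hv ↦ ?_⟩
  set e := piScalarRight R R M α
  have h : A.mulVecLin.lTensor M (e.symm v) ∈ (I ^ (n + K) • ⊤ : Submodule R _) := by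
    have := smul_top_le_comap_smul_top _ (piScalarRight R R M β).symm.toLinearMap hv
    rwa [mem_comap, LinearEquiv.coe_coe, ← e.apply_symm_apply v, smulVecLin_piScalarRight,
      LinearEquiv.symm_apply_apply] at this
  obtain ⟨t₁, ht₁, t₂, ht₂, ht⟩ := mem_sup.1 (hK n h)
  rw [← e.apply_symm_apply v, ← ht, map_add]
  refine add_mem (mem_sup_left ?_)
    (mem_sup_right (smul_top_le_comap_smul_top _ e.toLinearMap ht₂))
  rw [mem_ker, smulVecLin_piScalarRight, mem_ker.1 ht₁, map_zero]

theorem ker_smulVecLin_le_range_smulVecLin [Module.Flat R M] {A : Matrix β α R}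
    {B : Matrix α γ R} (h : Function.Exact B.mulVecLin A.mulVecLin) :
    ker (A.smulVecLin M) ≤ range (B.smulVecLin M) := by
  intro v hv
  obtain ⟨w, hw⟩ := (Module.Flat.lTensor_exact M h ((piScalarRight R R M α).symm v)).1 <| by
    apply (piScalarRight R R M β).injective
    rw [← smulVecLin_piScalarRight, LinearEquiv.apply_symm_apply, map_zero]
    exact hv
  refine ⟨piScalarRight R R M γ w, ?_⟩
  rw [smulVecLin_piScalarRight, hw, LinearEquiv.apply_symm_apply]

end Matrix

namespace AdicCompletion

variable {A B C : Type*} [AddCommGroup A] [Module R A] [AddCommGroup B] [Module R B]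
  [AddCommGroup C] [Module R C]

theorem exists_adicCauchySequence_apply_eq (κ : A →ₗ[R] B) (a : ℕ → A)
    (ha : ∀ n, κ (a (n + 1)) - κ (a n) ∈ (I ^ n • ⊤ : Submodule R A).map κ) :
    ∃ u : AdicCauchySequence I A, ∀ n, κ (u n) = κ (a n) := by
  choose d hd hκd using ha
  let u n := a 0 + ∑ t ∈ Finset.range n, d t
  refine ⟨AdicCauchySequence.mk I A u fun n ↦ ?_, fun n ↦ ?_⟩
  · rw [SModEq.sub_mem]
    simpa [u, Finset.sum_range_succ] using neg_mem (hd n)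
  · induction n with
    | zero => simp [u]
    | succ n ih =>
      simp only [AdicCauchySequence.mk_coe, u, Finset.sum_range_succ, ← add_assoc, map_add]
        at ih ⊢
      rw [ih, hκd]
      abel

theorem ker_map_le_range_map {κ : A →ₗ[R] B} {φ : B →ₗ[R] C} {K₁ K₂ : ℕ}
    (hφ : ∀ n, (I ^ (n + K₁) • ⊤ : Submodule R C).comap φ ≤ range κ ⊔ I ^ n • ⊤)
    (hκ : ∀ n, (I ^ (n + K₂) • ⊤ : Submodule R B).comap κ ≤ ker κ ⊔ I ^ n • ⊤) :
    ker (map I φ) ≤ range (map I κ) := by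
  intro x hx
  induction x using induction_on with | h b => ?_
  have hcauchy {m n : ℕ} (h : m ≤ n) : b n - b m ∈ (I ^ m • ⊤ : Submodule R B) := by
    simpa using neg_mem (SModEq.sub_mem.1 (b.2 h))
  have hφb (n : ℕ) : φ (b n) ∈ (I ^ n • ⊤ : Submodule R C) := by
    simpa [map_mk] using congr($hx |>.val n)
  choose y hy e he hbye using fun n ↦ mem_sup.1 (hφ (n + K₂) (hφb (n + K₂ + K₁)))
  choose a ha using hy
  simp only [← ha] at hbye
  have hκa (n : ℕ) : κ (a n) - b n ∈ (I ^ n • ⊤ : Submodule R B) := by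
    rw [← add_sub_cancel_right (κ (a n)) (e n), hbye, sub_right_comm]
    exact sub_mem (hcauchy (by omega)) (pow_smul_top_le I B (by omega) (he n))
  obtain ⟨u, hu⟩ := exists_adicCauchySequence_apply_eq I κ a fun n ↦ by
    have : κ (a (n + 1) - a n) ∈ (I ^ (n + K₂) • ⊤ : Submodule R B) := by
      rw [map_sub, ← add_sub_cancel_right (κ (a (n + 1))) (e (n + 1)),
        ← add_sub_cancel_right (κ (a n)) (e n), hbye, hbye]
      have hb := hcauchy (m := n + K₂ + K₁) (n := n + 1 + K₂ + K₁) (by omega)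
      convert add_mem (sub_mem (pow_smul_top_le I B (by omega) hb)
        (pow_smul_top_le I B (by omega) (he (n + 1)))) (he n) using 1
      abel
    obtain ⟨z, hz, w, hw, hzw⟩ := mem_sup.1 (hκ n this)
    exact ⟨w, hw, by rw [← map_sub, ← hzw, map_add, mem_ker.1 hz, zero_add]⟩
  refine ⟨mk I A u, ?_⟩
  ext n
  simpa [map_mk, Submodule.Quotient.eq, hu] using hκa n

variable {α β γ : Type*} [Fintype α]

theorem pi_map_smulVecLin (A : Matrix β α R) (X : AdicCompletion I (α → M)) (b : β) :
    pi I (fun _ ↦ M) (map I (A.smulVecLin M) X) b = ∑ a, A b a • pi I (fun _ ↦ M) X a := by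
  induction X using induction_on with | h x => ?_
  refine AdicCompletion.ext fun n ↦ ?_
  simp [map_mk, val_sum_apply, val_smul_apply]
  simp only [← Submodule.mkQ_apply, map_sum, _root_.map_smul]

variable [DecidableEq α] [Fintype β] [DecidableEq β] [Fintype γ] [DecidableEq γ]

theorem exists_eq_sum_smul_of_sum_smul_eq_zero [IsNoetherianRing R] [Module.Flat R M]
    {A : Matrix β α R} {B : Matrix α γ R} (h : Function.Exact B.mulVecLin A.mulVecLin)
    {x : α → AdicCompletion I M} (hx : ∀ b, ∑ a, A b a • x a = 0) :
    ∃ y : γ → AdicCompletion I M, ∀ a, x a = ∑ c, B a c • y c := by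
  obtain ⟨K₁, hK₁⟩ := A.exists_comap_smulVecLin_pow_smul_top_le I M
  obtain ⟨K₂, hK₂⟩ := B.exists_comap_smulVecLin_pow_smul_top_le I M
  have hker := Matrix.ker_smulVecLin_le_range_smulVecLin M h
  have hX : (piEquivOfFintype I fun _ ↦ M).symm x ∈ ker (map I (A.smulVecLin M)) := by
    apply (piEquivOfFintype I fun _ : β ↦ M).injective
    funext b
    rw [piEquivOfFintype_apply, pi_map_smulVecLin, ← piEquivOfFintype_apply,
      LinearEquiv.apply_symm_apply, hx b, _root_.map_zero, Pi.zero_apply]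
  obtain ⟨Y, hY⟩ :=
    ker_map_le_range_map I (fun n ↦ (hK₁ n).trans (sup_le_sup_right hker _)) hK₂ hX
  refine ⟨piEquivOfFintype I _ Y, fun a ↦ ?_⟩
  rw [← (piEquivOfFintype I fun _ ↦ M).apply_symm_apply x, ← hY, piEquivOfFintype_apply,
    pi_map_smulVecLin]
  simp only [piEquivOfFintype_apply]

end AdicCompletion

end

theorem flat_adicCompletion_of_flat_of_projective_mod_general
    {R : Type*} [CommRing R] [IsNoetherianRing R] (I : Ideal R)
    (M : Type*) [AddCommGroup M] [Module R M] [Module.Flat R M] :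
    Module.Flat R (AdicCompletion I M) := by
  refine Module.Flat.iff_forall_isTrivialRelation.mpr fun {l f x} hfx ↦ ?_
  let A : Matrix Unit (Fin l) R := Matrix.of fun _ ↦ f
  obtain ⟨c, s, hs⟩ := Submodule.fg_iff_exists_fin_generating_family.mp
    (IsNoetherian.noetherian (ker A.mulVecLin))
  have hexact : Function.Exact (Matrix.of fun i j ↦ s j i).mulVecLin A.mulVecLin := by
    rw [LinearMap.exact_iff, Matrix.range_mulVecLin, ← hs]
    rfl
  obtain ⟨y, hy⟩ := AdicCompletion.exists_eq_sum_smul_of_sum_smul_eq_zero I M hexact fun _ ↦ hfx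
  refine ⟨c, fun i j ↦ s j i, y, hy, fun j ↦ ?_⟩
  have : s j ∈ ker A.mulVecLin := hs ▸ Submodule.subset_span ⟨j, rfl⟩
  simpa [A, Matrix.mulVec, dotProduct] using congr_fun this ()

theorem flat_adicCompletion_of_flat_of_projective_mod
    {R : Type*} [CommRing R] [IsNoetherianRing R] (I : Ideal R) (hI : I.FG)
    (M : Type*) [AddCommGroup M] [Module R M] [Module.Flat R M]
    (hproj : Module.Projective (R ⧸ I) ((R ⧸ I) ⊗[R] M)) :
    Module.Flat R (AdicCompletion I M) :=
  flat_adicCompletion_of_flat_of_projective_mod_general I M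
end

section
/- Let R be a Noetherian commutative ring and I ⊆ R an ideal. Then the I-adic completion of any free R-module is a flat R-module. -/
/-!
Write a relation `∑ fᵢ xᵢ = 0` in the completion `F^` as `f · x = 0` with `x ∈ (F^)ˡ`. Since `R`
is Noetherian, the relations among the `fᵢ` are generated by the columns of a finite matrix `A`,
so `Rᵏ → Rˡ → R` (by `A`, then `f`) is exact. As `F` is free, the same matrices give an exact
sequence `Fᵏ → Fˡ → F`, and working one basis coordinate at a time, both maps inherit the
Artin–Rees property of maps into the finite modules `Rˡ` and `R`. This uniform control of
`Iⁿ`-multiples is exactly what is needed to lift Cauchy sequences, so completion keeps the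
sequence exact: `x = A y` for some `y ∈ (F^)ᵏ`, i.e. the relation is trivial, and `F^` is flat
by the equational criterion.
-/

open Function

namespace LinearMap

variable {R M N : Type*} [CommRing R] [AddCommGroup M] [Module R M] [AddCommGroup N] [Module R N]

def IsArtinRees (I : Ideal R) (f : M →ₗ[R] N) : Prop :=
  ∃ c, ∀ n, (I ^ (n + c) • ⊤ : Submodule R N) ⊓ range f ≤ (I ^ n • ⊤ : Submodule R M).map f

theorem isArtinRees_of_finite [IsNoetherianRing R] [Module.Finite R N] (I : Ideal R)
    (f : M →ₗ[R] N) : f.IsArtinRees I := by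
  obtain ⟨c, hc⟩ := Ideal.exists_pow_inf_eq_pow_smul I (range f)
  refine ⟨c, fun n ↦ ?_⟩
  rw [hc (n + c) (by omega), Nat.add_sub_cancel, Submodule.map_smul'', Submodule.map_top]
  exact smul_mono_right _ inf_le_right

end LinearMap

namespace AdicCompletion

variable {R M N P : Type*} [CommRing R] (I : Ideal R)
  [AddCommGroup M] [Module R M] [AddCommGroup N] [Module R N] [AddCommGroup P] [Module R P]

theorem exists_adicCauchySequence_map_eq (f : M →ₗ[R] N) (z : ℕ → M)
    (hz : ∀ n, f (z (n + 1)) - f (z n) ∈ (I ^ n • ⊤ : Submodule R M).map f) :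
    ∃ y : AdicCauchySequence I M, ∀ n, f (y n) = f (z n) := by
  choose u hu hfu using hz
  let y n := z 0 + ∑ l ∈ Finset.range n, u l
  refine ⟨AdicCauchySequence.mk I M y fun n ↦ ?_, fun n ↦ ?_⟩
  · rw [SModEq.sub_mem]
    simpa [y, Finset.sum_range_succ] using Submodule.neg_mem _ (hu n)
  · induction n with
    | zero => simp [y]
    | succ n ih =>
      simp only [AdicCauchySequence.mk_coe, y, Finset.sum_range_succ, map_add, hfu] at ih ⊢
      rw [← add_assoc, ih]
      abel

theorem exact_map_of_isArtinRees {f : M →ₗ[R] N} {g : N →ₗ[R] P} (hfg : Exact f g)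
    (hf : f.IsArtinRees I) (hg : g.IsArtinRees I) : Exact (map I f) (map I g) := by
  refine LinearMap.exact_of_comp_eq_zero_of_ker_le_range ?_ fun x hx ↦ ?_
  · rw [map_comp, hfg.linearMap_comp_eq_zero, map_zero]
  obtain ⟨c₁, hc₁⟩ := hf
  obtain ⟨c₂, hc₂⟩ := hg
  induction x using induction_on with | h a => ?_
  have hmono {m n : ℕ} (h : m ≤ n) : (I ^ n • ⊤ : Submodule R N) ≤ I ^ m • ⊤ :=
    Submodule.smul_mono_left (Ideal.pow_le_pow_right h)
  have hga (n : ℕ) : g (a n) ∈ (I ^ n • ⊤ : Submodule R P) := by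
    simpa using congrArg (fun x ↦ x.val n) hx
  have approx (n : ℕ) : ∃ z, f z ≡ a (n + c₂) [SMOD (I ^ n • ⊤ : Submodule R N)] := by
    obtain ⟨d, hd, hgd⟩ := hc₂ n ⟨hga (n + c₂), a (n + c₂), rfl⟩
    obtain ⟨z, hz⟩ := (hfg (a (n + c₂) - d)).mp (by simp [hgd])
    exact ⟨z, by simpa [hz, SModEq.sub_mem] using Submodule.neg_mem _ hd⟩
  choose z hz using approx
  -- The shift by `c₁` lets Artin–Rees for `f` make the successive corrections `Iⁿ`-small.
  obtain ⟨y, hy⟩ := exists_adicCauchySequence_map_eq I f (fun n ↦ z (n + c₁)) fun n ↦ by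
    refine hc₁ n ⟨SModEq.sub_mem.mp ?_, z (n + 1 + c₁) - z (n + c₁), map_sub _ _ _⟩
    calc f (z (n + 1 + c₁)) ≡ a (n + 1 + c₁ + c₂) [SMOD (I ^ (n + c₁) • ⊤ : Submodule R N)] :=
          (hz _).mono (hmono (by omega))
      _ ≡ a (n + c₁ + c₂) [SMOD (I ^ (n + c₁) • ⊤ : Submodule R N)] :=
          ((a.property (by omega)).mono (hmono (by omega))).symm
      _ ≡ f (z (n + c₁)) [SMOD (I ^ (n + c₁) • ⊤ : Submodule R N)] := (hz _).symm
  refine ⟨mk I M y, ext fun n ↦ ?_⟩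
  simp only [map_mk, mk_apply_coe, AdicCauchySequence.map_apply_coe, Submodule.mkQ_apply, hy]
  calc f (z (n + c₁)) ≡ a (n + c₁ + c₂) [SMOD (I ^ n • ⊤ : Submodule R N)] :=
        (hz _).mono (hmono (by omega))
    _ ≡ a n [SMOD (I ^ n • ⊤ : Submodule R N)] := (a.property (by omega)).symm

end AdicCompletion

namespace Module.Basis

variable {R F ι : Type*} [CommRing R] [AddCommGroup F] [Module R F]

theorem exists_finset_sum_coord_smul {m : Type*} [Finite m] (b : Basis ι R F) (v : m → F) :
    ∃ T : Finset ι, ∑ i ∈ T, (fun k ↦ b.coord i (v k) • b i) = v := by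
  classical
  have := Fintype.ofFinite m
  refine ⟨Finset.univ.biUnion fun k ↦ (b.repr (v k)).support, funext fun k ↦ ?_⟩
  rw [Finset.sum_apply]
  conv_rhs => rw [← b.linearCombination_repr (v k), Finsupp.linearCombination_apply]
  exact (Finsupp.sum_of_support_subset _
    (Finset.subset_biUnion_of_mem (fun k ↦ (b.repr (v k)).support) (Finset.mem_univ k))
    (fun i a ↦ a • b i) fun _ _ ↦ zero_smul R _).symm

end Module.Basis

namespace Matrix

variable {R : Type*} [CommRing R] {l m n : Type*} [Fintype n]
variable {M N : Type*} [AddCommGroup M] [Module R M] [AddCommGroup N] [Module R N]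

variable (M) in
def mulVecModule (A : Matrix m n R) :
    (n → M) →ₗ[R] m → M :=
  LinearMap.pi fun i ↦ ∑ j, A i j • LinearMap.proj j

@[simp]
theorem mulVecModule_apply (A : Matrix m n R) (v : n → M) (i : m) :
    A.mulVecModule M v i = ∑ j, A i j • v j := by
  simp [mulVecModule]

theorem mulVecModule_mul [Fintype m] (B : Matrix l m R) (A : Matrix m n R) :
    (B * A).mulVecModule M = B.mulVecModule M ∘ₗ A.mulVecModule M := by
  ext v i
  simp only [mulVecModule_apply, mul_apply, Finset.sum_smul, LinearMap.coe_comp,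
    Function.comp_apply, Finset.smul_sum, smul_smul]
  exact Finset.sum_comm

theorem comp_mulVecModule (A : Matrix m n R) (φ : M →ₗ[R] N) (v : n → M) :
    φ ∘ A.mulVecModule M v = A.mulVecModule N (φ ∘ v) := by
  ext i
  simp

theorem mulVecModule_self (A : Matrix m n R) : A.mulVecModule R = A.mulVecLin := by
  ext v i
  simp [mulVec, dotProduct]

theorem mul_eq_zero_of_exact [Fintype m] {A : Matrix m n R} {B : Matrix l m R}
    (h : Exact A.mulVecLin B.mulVecLin) : B * A = 0 := by
  classical
  have := h.linearMap_comp_eq_zero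
  rw [← mulVecLin_mul] at this
  exact Matrix.toLin'.injective (by simpa [toLin'_apply'] using this)

theorem exists_exact_mulVecLin [Fintype m] [IsNoetherianRing R] (B : Matrix l m R) :
    ∃ (k : ℕ) (A : Matrix m (Fin k) R), Exact A.mulVecLin B.mulVecLin := by
  obtain ⟨k, v, hv⟩ := Submodule.fg_iff_exists_fin_generating_family.mp
    (IsNoetherian.noetherian (LinearMap.ker B.mulVecLin))
  refine ⟨k, of fun i j ↦ v j i, LinearMap.exact_iff.mpr ?_⟩
  rw [range_mulVecLin, ← hv]
  rfl

theorem mem_map_mulVecModule_of_forall_coord {F ι : Type*} [AddCommGroup F] [Module R F]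
    (b : Module.Basis ι R F) [Finite m]
    (A : Matrix m n R) (J : Ideal R) (w : m → F)
    (hw : ∀ i, b.coord i ∘ w ∈ (J • ⊤ : Submodule R (n → R)).map A.mulVecLin) :
    w ∈ (J • ⊤ : Submodule R (n → F)).map (A.mulVecModule F) := by
  obtain ⟨T, hT⟩ := b.exists_finset_sum_coord_smul w
  rw [← hT]
  refine Submodule.sum_mem _ fun i _ ↦ ?_
  obtain ⟨u, hu, hAu⟩ := hw i
  refine ⟨fun j ↦ u j • b i, Submodule.smul_top_le_comap_smul_top J
    (LinearMap.compLeft (LinearMap.toSpanSingleton R F (b i)) n) hu, funext fun k ↦ ?_⟩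
  simp only [mulVecModule_apply, smul_smul, ← Finset.sum_smul]
  exact congrArg (· • b i) (congrFun hAu k)

theorem exact_mulVecModule [Fintype m] {A : Matrix m n R} {B : Matrix l m R}
    (h : Exact A.mulVecLin B.mulVecLin) (F : Type*) [AddCommGroup F] [Module R F]
    [Module.Free R F] : Exact (A.mulVecModule F) (B.mulVecModule F) := by
  let b := Module.Free.chooseBasis R F
  refine LinearMap.exact_of_comp_eq_zero_of_ker_le_range ?_ fun w hw ↦ ?_
  · rw [← mulVecModule_mul, mul_eq_zero_of_exact h]
    ext; simp
  rw [← Submodule.map_top, ← Submodule.top_smul ⊤]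
  refine mem_map_mulVecModule_of_forall_coord b A ⊤ w fun i ↦ ?_
  rw [Submodule.top_smul, Submodule.map_top, ← h.linearMap_ker_eq, LinearMap.mem_ker,
    ← mulVecModule_self, ← comp_mulVecModule, LinearMap.mem_ker.mp hw]
  ext; simp

theorem isArtinRees_mulVecModule [Finite m] [IsNoetherianRing R] (I : Ideal R) (A : Matrix m n R)
    (F : Type*) [AddCommGroup F] [Module R F] [Module.Free R F] :
    (A.mulVecModule F).IsArtinRees I := by
  let b := Module.Free.chooseBasis R F
  obtain ⟨c, hc⟩ := A.mulVecLin.isArtinRees_of_finite I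
  refine ⟨c, fun k w ⟨hwI, v, hv⟩ ↦ mem_map_mulVecModule_of_forall_coord b A _ w fun i ↦
    hc k ⟨Submodule.smul_top_le_comap_smul_top _ (LinearMap.compLeft (b.coord i) m) hwI, ?_⟩⟩
  exact ⟨b.coord i ∘ v, by rw [← mulVecModule_self, ← comp_mulVecModule, ← hv]⟩

section Completion

open AdicCompletion

variable (I : Ideal R) [Fintype m] [DecidableEq m] [DecidableEq n]

theorem piEquivOfFintype_map_mulVecModule (A : Matrix m n R) (x : AdicCompletion I (n → M)) :
    piEquivOfFintype I (fun _ ↦ M) (AdicCompletion.map I (A.mulVecModule M) x) =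
      A.mulVecModule (AdicCompletion I M) (piEquivOfFintype I (fun _ ↦ M) x) := by
  induction x using induction_on with | h a => ?_
  ext i k
  simp only [map_mk, piEquivOfFintype_apply, pi_apply_coe, mk_apply_coe,
    AdicCauchySequence.map_apply_coe, Submodule.mkQ_apply, LinearMap.reduceModIdeal_apply,
    LinearMap.coe_proj, Function.eval, mulVecModule_apply, val_sum_apply, val_smul_apply,
    ← Submodule.Quotient.mk_smul]
  exact map_sum (Submodule.mkQ _) _ _

theorem exact_mulVecModule_adicCompletion [Fintype l] [DecidableEq l] [IsNoetherianRing R]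
    {A : Matrix m n R} {B : Matrix l m R} (h : Exact A.mulVecLin B.mulVecLin)
    (F : Type*) [AddCommGroup F] [Module R F] [Module.Free R F] :
    Exact (A.mulVecModule (AdicCompletion I F)) (B.mulVecModule (AdicCompletion I F)) :=
  Exact.of_ladder_linearEquiv_of_exact
    (e₁ := (piEquivOfFintype I fun _ : n ↦ F).restrictScalars R)
    (e₂ := (piEquivOfFintype I fun _ : m ↦ F).restrictScalars R)
    (e₃ := (piEquivOfFintype I fun _ : l ↦ F).restrictScalars R)
    (LinearMap.ext fun x ↦ (piEquivOfFintype_map_mulVecModule I A x).symm)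
    (LinearMap.ext fun x ↦ (piEquivOfFintype_map_mulVecModule I B x).symm)
    (exact_map_of_isArtinRees I (exact_mulVecModule h F) (isArtinRees_mulVecModule I A F)
      (isArtinRees_mulVecModule I B F))

end Completion

end Matrix

open Matrix in
theorem flat_adicCompletion_of_free
    {R : Type*} [CommRing R] [IsNoetherianRing R] (I : Ideal R)
    (F : Type*) [AddCommGroup F] [Module R F] [Module.Free R F] :
    Module.Flat R (AdicCompletion I F) := by
  refine Module.Flat.of_forall_isTrivialRelation fun {l f x} hfx ↦ ?_
  obtain ⟨k, A, hA⟩ := exists_exact_mulVecLin (replicateRow Unit f)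
  obtain ⟨y, hy⟩ := (exact_mulVecModule_adicCompletion I hA F x).mp (funext fun _ ↦ by simpa)
  refine ⟨k, A, y, fun i ↦ by rw [← hy, mulVecModule_apply], fun j ↦ ?_⟩
  simpa [mul_apply] using congrFun (congrFun (mul_eq_zero_of_exact hA) ()) j
end

section
/- Let R be a Noetherian commutative ring. Then any (possibly infinite) product of copies of R is a flat R-module. -/
/-!
For an `R`-module `N`, compare `N ⊗ R^ι` with `N^ι` through `x ⊗ a ↦ (a j • x)_j`. This map is
an isomorphism for `N = R^n`, hence surjective for every finite `N`. Over a Noetherian ring the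
kernel of a presentation `R^n ↠ N` is again finite, and the four lemma applied to the tensored
presentation and its `ι`-th power (both right exact) makes the map injective for finite `N`.
For an ideal `I`, the map `I ⊗ R^ι → R ⊗ R^ι` followed by the comparison map is
`I ⊗ R^ι ≅ I^ι ↪ R^ι`, so it is injective: `R^ι` is flat.
-/

open TensorProduct

theorem Function.Exact.linearMap_compLeft {R M N P : Type*} [CommRing R] [AddCommGroup M]
    [Module R M] [AddCommGroup N] [Module R N] [AddCommGroup P] [Module R P]
    {f : M →ₗ[R] N} {g : N →ₗ[R] P} (hfg : Function.Exact f g) (ι : Type*) :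
    Function.Exact (f.compLeft ι) (g.compLeft ι) := by
  intro y
  refine ⟨fun hy => ?_, ?_⟩
  · choose x hx using fun i => (hfg (y i)).mp (congrFun hy i)
    exact ⟨x, funext hx⟩
  · rintro ⟨x, rfl⟩
    funext i
    exact hfg.apply_apply_eq_zero (x i)

namespace TensorProduct

variable {R : Type*} [CommRing R] (ι : Type*)

theorem compLeft_comp_piScalarRightHom {M N : Type*} [AddCommGroup M] [Module R M]
    [AddCommGroup N] [Module R N] (f : M →ₗ[R] N) :
    f.compLeft ι ∘ₗ piScalarRightHom R R M ι = piScalarRightHom R R N ι ∘ₗ f.rTensor (ι → R) := by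
  ext x a
  simp

theorem piScalarRightHom_pi_bijective (κ : Type*) [Finite κ] :
    Function.Bijective (piScalarRightHom R R (κ → R) ι) := by
  classical
  have := Fintype.ofFinite κ
  have h : ⇑(piScalarRightHom R R (κ → R) ι) =
      Equiv.piComm _ ∘ piScalarRight R R (ι → R) κ ∘ TensorProduct.comm R (κ → R) (ι → R) := by
    ext x j k
    induction x with
    | zero => simp [Function.swap]
    | tmul x a => simp [Function.swap, mul_comm]
    | add x y hx hy => simp_all [Function.swap]
  rw [h]
  exact (Equiv.piComm _).bijective.comp
    ((piScalarRight R R _ κ).bijective.comp (TensorProduct.comm R _ _).bijective)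

theorem piScalarRightHom_surjective (N : Type*) [AddCommGroup N] [Module R N]
    [Module.Finite R N] : Function.Surjective (piScalarRightHom R R N ι) := by
  obtain ⟨n, p, hp⟩ := Module.Finite.exists_fin' R N
  refine Function.Surjective.of_comp (g := p.rTensor (ι → R)) ?_
  rw [← LinearMap.coe_comp, ← compLeft_comp_piScalarRightHom, LinearMap.coe_comp]
  exact hp.comp_left.comp (piScalarRightHom_pi_bijective ι (Fin n)).surjective

theorem piScalarRightHom_injective [IsNoetherianRing R] (N : Type*) [AddCommGroup N]
    [Module R N] [Module.Finite R N] : Function.Injective (piScalarRightHom R R N ι) := by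
  obtain ⟨n, p, hp⟩ := Module.Finite.exists_fin' R N
  exact LinearMap.injective_of_surjective_of_injective_of_right_exact
    ((LinearMap.ker p).subtype.rTensor (ι → R)) (p.rTensor (ι → R))
    ((LinearMap.ker p).subtype.compLeft ι) (p.compLeft ι) _ _ _
    (compLeft_comp_piScalarRightHom ι _) (compLeft_comp_piScalarRightHom ι p)
    (rTensor_exact _ p.exact_subtype_ker_map hp) (p.exact_subtype_ker_map.linearMap_compLeft ι)
    (piScalarRightHom_surjective ι _) (piScalarRightHom_pi_bijective ι (Fin n)).injective
    (LinearMap.rTensor_surjective _ hp)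

end TensorProduct

theorem flat_pi_of_noetherian
    {R : Type*} [CommRing R] [IsNoetherianRing R] (ι : Type*) :
    Module.Flat R (ι → R) := by
  refine Module.Flat.iff_rTensor_injective'.mpr fun I => ?_
  refine Function.Injective.of_comp (f := piScalarRightHom R R R ι) ?_
  rw [← LinearMap.coe_comp, ← compLeft_comp_piScalarRightHom, LinearMap.coe_comp]
  exact I.injective_subtype.comp_left.comp (piScalarRightHom_injective ι I)
end

section
/- Faithfully flat descent for finite projectivity: let R → S be a faithfully flat map of commutative rings and M an R-module such that S ⊗_R M is a finitely generated projective S-module. Then M is a finitely generated projective R-module. -/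
/-!
Finiteness and flatness descend along faithfully flat maps. Finite presentation descends too:
for a surjection `p : Rⁿ → M`, flatness of `S` identifies `S ⊗ ker p` with the kernel of the
base-changed surjection `Sⁿ → S ⊗ M`, which is finitely generated, so `ker p` is finitely
generated. A finitely presented flat module is projective.
-/

open TensorProduct

theorem Module.FinitePresentation.of_finitePresentation_tensorProduct_of_faithfullyFlat
    {R : Type*} [CommRing R] (S : Type*) [CommRing S] [Algebra R S] [Module.FaithfullyFlat R S]
    {M : Type*} [AddCommGroup M] [Module R M] [Module.FinitePresentation S (S ⊗[R] M)] :
    Module.FinitePresentation R M := by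
  have : Module.Finite R M := .of_finite_tensorProduct_of_faithfullyFlat S
  obtain ⟨n, p, hp⟩ := Module.Finite.exists_fin' R M
  have hpS : Function.Surjective (AlgebraTensorModule.lTensor S S p) :=
    LinearMap.lTensor_surjective S hp
  have : Module.Finite S (LinearMap.ker (AlgebraTensorModule.lTensor S S p)) :=
    Module.Finite.iff_fg.mpr (Module.FinitePresentation.fg_ker _ hpS)
  have : Module.Finite S (S ⊗[R] LinearMap.ker p) :=
    .equiv (LinearMap.tensorKerEquiv S S p).symm
  have : Module.Finite R (LinearMap.ker p) := .of_finite_tensorProduct_of_faithfullyFlat S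
  exact Module.finitePresentation_of_surjective p hp (Module.Finite.iff_fg.mp this)

theorem finite_projective_of_faithfullyFlat_descent
    {R S : Type*} [CommRing R] [CommRing S] [Algebra R S]
    [Module.FaithfullyFlat R S]
    (M : Type*) [AddCommGroup M] [Module R M]
    [Module.Finite S (S ⊗[R] M)] [Module.Projective S (S ⊗[R] M)] :
    Module.Finite R M ∧ Module.Projective R M := by
  have := Module.finitePresentation_of_projective S (S ⊗[R] M)
  have : Module.FinitePresentation R M :=
    .of_finitePresentation_tensorProduct_of_faithfullyFlat S
  have : Module.Flat R M := .of_flat_tensorProduct R M S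
  exact ⟨inferInstance, Module.Flat.projective_of_finitePresentation⟩
end

section
/- Let R be a Noetherian commutative ring, I an ideal, and M a finitely generated R-module. Then the natural map R^∧ ⊗_R M → M^∧ from the base change along the I-adic completion of R to the I-adic completion of M is an isomorphism. -/
/-!
Naturality of `AdicCompletion.ofTensorProduct` makes its bijectivity invariant under linear
equivalences. A finite module `M` in an arbitrary universe is isomorphic to a quotient of some
`Fin n → R`, which lives in the universe of `R`; there the isomorphism is the Artin–Rees theorem
`AdicCompletion.ofTensorProduct_bijective_of_finite_of_isNoetherian`.
-/

open TensorProduct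

namespace AdicCompletion

theorem ofTensorProduct_bijective_of_linearEquiv {R : Type*} [CommRing R] (I : Ideal R)
    {M N : Type*} [AddCommGroup M] [Module R M] [AddCommGroup N] [Module R N]
    (e : M ≃ₗ[R] N) (h : Function.Bijective (ofTensorProduct I M)) :
    Function.Bijective (ofTensorProduct I N) := by
  have hcomp : Function.Bijective (ofTensorProduct I N ∘
      AlgebraTensorModule.map (LinearMap.id : AdicCompletion I R →ₗ[AdicCompletion I R] _)
        e.toLinearMap) := by
    rw [← LinearMap.coe_comp, ← ofTensorProduct_naturality, LinearMap.coe_comp]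
    exact (congr I e).bijective.comp h
  exact (Function.Bijective.of_comp_iff _
    (AlgebraTensorModule.congr (LinearEquiv.refl _ _) e).bijective).mp hcomp

end AdicCompletion

theorem adicCompletion_ofTensorProduct_bijective
    {R : Type*} [CommRing R] [IsNoetherianRing R] (I : Ideal R)
    (M : Type*) [AddCommGroup M] [Module R M] [Module.Finite R M] :
    Function.Bijective (AdicCompletion.ofTensorProduct I M) := by
  obtain ⟨n, f, hf⟩ := Module.Finite.exists_fin' R M
  exact AdicCompletion.ofTensorProduct_bijective_of_linearEquiv I
    (f.quotKerEquivOfSurjective hf)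
    (AdicCompletion.ofTensorProduct_bijective_of_finite_of_isNoetherian I _)
end
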